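/- (Necessary optimality conditions at infinity) Let f : ℝⁿ → ℝ ∪ {±∞} be lower semi-continuous and let C ⊆ ℝⁿ be an unbounded closed set, with I := {1,…,n}. Assume that either (i) D^↑_f(∞) ∩ int T_C(∞_I) ≠ ∅, or (ii) int D^↑_f(∞) ∩ T_C(∞_I) ≠ ∅, where D^↑_f(∞) := {v : f^↑(∞; v) < +∞}. If there exists a sequence x_k ∈ C with ‖x_k‖ → ∞ and f(x_k) → inf_{x ∈ C} f(x) > −∞, then 0 ∈ ∂f(∞) + N_C(∞_I) and f^↑(∞; v) ≥ 0 for all v ∈ T_C(∞_I). -/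

import Mathlib

open Filter Topology Metric Set Bornology
open scoped InnerProductSpace Pointwise

noncomputable section

/-- Euclidean `n`-space. -/
abbrev En (n : ℕ) : Type := EuclideanSpace ℝ (Fin n)

/-- The Clarke tangent cone at infinity of `C ⊆ E`, where "going to infinity" is
measured by `‖p x‖ → ∞` for a projection map `p`:  `v` belongs to the cone iff for all
sequences `x k ∈ C` with `‖p (x k)‖ → ∞` and all positive sequences `t k → 0` there is a
sequence `w k → v` with `x k + t k • w k ∈ C` for all `k`. -/
def tangentConeAtInfty {E F : Type*} [NormedAddCommGroup E] [NormedSpace ℝ E] [Norm F]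
    (p : E → F) (C : Set E) : Set E :=
  {v | ∀ (x : ℕ → E) (t : ℕ → ℝ), (∀ k, x k ∈ C) →
      Tendsto (fun k => ‖p (x k)‖) atTop atTop →
      (∀ k, 0 < t k) → Tendsto t atTop (𝓝 0) →
      ∃ w : ℕ → E, Tendsto w atTop (𝓝 v) ∧ ∀ k, x k + t k • w k ∈ C}

/-- The normal cone at infinity: the polar of the Clarke tangent cone at infinity. -/
def normalConeAtInfty {n : ℕ} {F : Type*} [Norm F] (p : En n → F) (C : Set (En n)) :
    Set (En n) :=
  {w | ∀ v ∈ tangentConeAtInfty p C, ⟪v, w⟫_ℝ ≤ 0}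

/-- The epigraph of an extended-real-valued function. -/
def epig {n : ℕ} (f : En n → EReal) : Set (En n × ℝ) := {p | f p.1 ≤ (p.2 : EReal)}

/-- Clarke tangent cone at infinity of the epigraph of `f`, with respect to the index set
`I = {1,…,n} ⊆ {1,…,n+1}`, i.e. the projection `(x, y) ↦ x`. -/
def Tepi {n : ℕ} (f : En n → EReal) : Set (En n × ℝ) :=
  tangentConeAtInfty Prod.fst (epig f)

/-- Normal cone at infinity of the epigraph of `f` (polar cone of `Tepi f`, using the
inner product `⟪(v,r), (w,s)⟫ = ⟪v,w⟫ + r*s` of `ℝⁿ × ℝ = ℝ^{n+1}`). -/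
def Nepi {n : ℕ} (f : En n → EReal) : Set (En n × ℝ) :=
  {w | ∀ q ∈ Tepi f, ⟪q.1, w.1⟫_ℝ + q.2 * w.2 ≤ 0}

/-- The set `∂f(∞)` of subgradients of `f` at infinity. -/
def subgradInfty {n : ℕ} (f : En n → EReal) : Set (En n) :=
  {ξ | (ξ, (-1:ℝ)) ∈ Nepi f}

/-- Extended-real subtraction with the paper's convention that `λ₁ + λ₂ = +∞` whenever one
of the summands is `+∞`; thus `a - b = +∞` if `a = +∞` or `b = -∞`. -/
def esub (a b : EReal) : EReal := if a = ⊤ ∨ b = ⊥ then ⊤ else a - b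

/-- The difference quotient `(f (x + t • w) - f x) / t`. -/
def dq {n : ℕ} (f : En n → EReal) (x : En n) (t : ℝ) (w : En n) : EReal :=
  esub (f (x + t • w)) (f x) / (t : EReal)

/-- The filter of neighborhoods of infinity in `ℝⁿ` (`‖x‖ → ∞`). -/
def atInfty (n : ℕ) : Filter (En n) := comap (fun x : En n => ‖x‖) atTop

/-- The upper subderivative of `f` at infinity with respect to `v`:
`f^↑(∞; v) = lim_{ε↓0} limsup_{‖x‖→∞, t↓0} inf_{w ∈ B_ε(v)} (f(x+tw) - f(x))/t`;
since the inner `limsup` is antitone in `ε`, the limit as `ε ↓ 0` is the supremum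
over `ε > 0`. -/
def upSub {n : ℕ} (f : En n → EReal) (v : En n) : EReal :=
  ⨆ (ε : ℝ) (_ : 0 < ε),
    Filter.limsup (fun q : En n × ℝ => ⨅ w ∈ closedBall v ε, dq f q.1 q.2 w)
      (atInfty n ×ˢ 𝓝[>] (0:ℝ))

section ConeLemmas

variable {E F : Type*} [NormedAddCommGroup E] [NormedSpace ℝ E] [Norm F]
variable {p : E → F} {S : Set E}

theorem tcai_zero : (0 : E) ∈ tangentConeAtInfty p S := by
  intro x t hx _ _ _
  exact ⟨fun _ => 0, tendsto_const_nhds, fun k => by simpa using hx k⟩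

theorem tcai_smul {v : E} (hv : v ∈ tangentConeAtInfty p S) {c : ℝ} (hc : 0 < c) :
    c • v ∈ tangentConeAtInfty p S := by
  intro x t hx hpx ht0 ht
  obtain ⟨w, hw, hwS⟩ := hv x (fun k => c * t k) hx hpx (fun k => mul_pos hc (ht0 k))
    (by simpa using ht.const_mul c)
  refine ⟨fun k => c • w k, hw.const_smul c, fun k => ?_⟩
  have := hwS k
  rwa [show t k • c • w k = (c * t k) • w k by rw [smul_smul, mul_comm]]

theorem tcai_add (hp : ∀ z w : E, ‖p z‖ - ‖w‖ ≤ ‖p (z + w)‖) {u v : E}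
    (hu : u ∈ tangentConeAtInfty p S) (hv : v ∈ tangentConeAtInfty p S) :
    u + v ∈ tangentConeAtInfty p S := by
  intro x t hx hpx ht0 ht
  obtain ⟨w, hw, hwS⟩ := hu x t hx hpx ht0 ht
  have htw : Tendsto (fun k => t k • w k) atTop (𝓝 0) := by
    simpa using ht.smul hw
  have hb : ∀ᶠ k in atTop, ‖t k • w k‖ ≤ 1 := by
    have := htw.norm
    simp only [norm_zero] at this
    exact this.eventually_le_const one_pos
  have hpx' : Tendsto (fun k => ‖p (x k + t k • w k)‖) atTop atTop := by
    refine tendsto_atTop_mono' _ ?_ (tendsto_atTop_add_const_right _ (-1) hpx)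
    filter_upwards [hb] with k hk
    have := hp (x k) (t k • w k)
    linarith
  obtain ⟨w', hw', hw'S⟩ := hv (fun k => x k + t k • w k) t hwS hpx' ht0 ht
  refine ⟨fun k => w k + w' k, hw.add hw', fun k => ?_⟩
  have := hw'S k
  rwa [smul_add, ← add_assoc]

theorem tcai_smul' {v : E} (hv : v ∈ tangentConeAtInfty p S) {c : ℝ} (hc : 0 ≤ c) :
    c • v ∈ tangentConeAtInfty p S := by
  rcases eq_or_lt_of_le hc with h | h
  · simpa [← h] using (tcai_zero : (0:E) ∈ tangentConeAtInfty p S)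
  · exact tcai_smul hv h

theorem tcai_combo (hp : ∀ z w : E, ‖p z‖ - ‖w‖ ≤ ‖p (z + w)‖) {u v : E}
    (hu : u ∈ tangentConeAtInfty p S) (hv : v ∈ tangentConeAtInfty p S) {a b : ℝ}
    (ha : 0 ≤ a) (hb : 0 ≤ b) :
    a • u + b • v ∈ tangentConeAtInfty p S :=
  tcai_add hp (tcai_smul' hu ha) (tcai_smul' hv hb)

theorem tcai_uniform [ProperSpace E] (hp : ∀ z w : E, ‖p z‖ - ‖w‖ ≤ ‖p (z + w)‖)
    {K : Set E} (hK : IsCompact K) (hKT : K ⊆ tangentConeAtInfty p S) {eta : ℝ} (heta : 0 < eta) :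
    ∃ R δ : ℝ, 0 < δ ∧ ∀ u ∈ K, ∀ z ∈ S, R ≤ ‖p z‖ → ∀ t : ℝ, 0 < t → t ≤ δ →
      ∃ zeta, ‖zeta - u‖ ≤ eta ∧ z + t • zeta ∈ S := by
  by_contra h
  push_neg at h
  have hbad : ∀ k : ℕ, ∃ u ∈ K, ∃ z ∈ S, (k : ℝ) ≤ ‖p z‖ ∧
      ∃ t : ℝ, 0 < t ∧ t ≤ 1 / (k + 1) ∧ ∀ zeta, ‖zeta - u‖ ≤ eta → z + t • zeta ∉ S := by
    intro k
    obtain ⟨u, hu, z, hz, hpz, t, ht0, ht1, hzeta⟩ := h (k : ℝ) (1 / (k + 1))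
      (by positivity)
    exact ⟨u, hu, z, hz, hpz, t, ht0, ht1, hzeta⟩
  choose u hu z hz hpz t ht0 ht1 hbad using hbad
  obtain ⟨ubar, hubarK, phi, hphi, hul⟩ := hK.tendsto_subseq hu
  have hpz' : Tendsto (fun j => ‖p (z (phi j))‖) atTop atTop := by
    refine tendsto_atTop_mono (fun j => ?_) tendsto_natCast_atTop_atTop
    exact le_trans (Nat.cast_le.2 hphi.le_apply) (hpz (phi j))
  have ht' : Tendsto (fun j => t (phi j)) atTop (𝓝 0) := by
    refine tendsto_of_tendsto_of_tendsto_of_le_of_le (g := fun _ => (0:ℝ))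
      (h := fun j : ℕ => 1 / ((phi j : ℝ) + 1))
      tendsto_const_nhds (tendsto_one_div_add_atTop_nhds_zero_nat.comp hphi.tendsto_atTop)
      (fun j => (ht0 (phi j)).le) (fun j => ht1 (phi j))
  obtain ⟨w, hw, hwS⟩ := hKT hubarK (fun j => z (phi j)) (fun j => t (phi j))
    (fun j => hz (phi j)) hpz' (fun j => ht0 (phi j)) ht'
  have : ∀ᶠ j in atTop, ‖w j - u (phi j)‖ ≤ eta := by
    have hd : Tendsto (fun j => ‖w j - u (phi j)‖) atTop (𝓝 0) := by
      have := (hw.sub hul).norm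
      simpa using this
    exact hd.eventually_le_const heta
  obtain ⟨j, hj⟩ := this.exists
  exact hbad (phi j) (w j) hj (hwS j)
theorem tcai_hyper [ProperSpace E] (hS : IsClosed S)
    (hp : ∀ z w : E, ‖p z‖ - ‖w‖ ≤ ‖p (z + w)‖) {v : E} {ε : ℝ} (hε : 0 < ε)
    (hball : closedBall v (2 * ε) ⊆ tangentConeAtInfty p S) :
    ∃ R δ : ℝ, 0 < δ ∧ ∀ z ∈ S, R ≤ ‖p z‖ → ∀ t : ℝ, 0 < t → t ≤ δ →
      ∀ ζ, ‖ζ - v‖ ≤ ε → z + t • ζ ∈ S := by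
  obtain ⟨R₀, δ₀, hδ₀, Hu⟩ := tcai_uniform hp (isCompact_closedBall v (2*ε)) hball
    (show (0:ℝ) < ε/4 by positivity)
  refine ⟨R₀ + (‖v‖ + 2*ε) + 1, min δ₀ 1, lt_min hδ₀ one_pos, ?_⟩
  intro z hzS hpz t ht0 htδ ζ hζ
  have htδ₀ : t ≤ δ₀ := le_trans htδ (min_le_left _ _)
  have ht1 : t ≤ 1 := le_trans htδ (min_le_right _ _)
  have hnζ : ‖ζ‖ ≤ ‖v‖ + ε := by
    calc ‖ζ‖ = ‖(ζ - v) + v‖ := by rw [sub_add_cancel]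
    _ ≤ ‖ζ - v‖ + ‖v‖ := norm_add_le _ _
    _ ≤ ‖v‖ + ε := by linarith
  set Inv : ℕ → E → Prop := fun j c =>
    c ∈ S ∧ ‖c - (z + (t * (1 - (1/2:ℝ)^j)) • ζ)‖ ≤ ε/2 * (t * (1/2)^j) with hInvdef
  have hInv0 : Inv 0 z := by
    refine ⟨hzS, ?_⟩
    simp only [pow_zero, sub_self, mul_zero, zero_smul, add_zero, sub_self, norm_zero, pow_zero, mul_one]
    positivity
  have step : ∀ (j : ℕ) (c : E), Inv j c → ∃ c', Inv (j+1) c' := by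
    intro j c hc
    obtain ⟨hcS, hce⟩ := hc
    have hpowpos : (0:ℝ) < (1/2:ℝ)^j := by positivity
    have hpowle : ((1/2:ℝ))^j ≤ 1 := pow_le_one₀ (by norm_num) (by norm_num)
    set tj := t * (1/2:ℝ)^(j+1) with htj
    have htjpos : 0 < tj := by rw [htj]; positivity
    set e := c - (z + (t * (1 - (1/2:ℝ)^j)) • ζ) with he
    set uj := ζ - tj⁻¹ • e with huj
    have hee : ‖tj⁻¹ • e‖ ≤ ε := by
      rw [norm_smul, Real.norm_eq_abs, abs_of_pos (inv_pos.2 htjpos)]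
      have h2t : tj⁻¹ * (ε/2 * (t * (1/2:ℝ)^j)) = ε := by
        rw [htj]; field_simp; ring
      calc tj⁻¹ * ‖e‖ ≤ tj⁻¹ * (ε/2 * (t * (1/2:ℝ)^j)) := by
            exact mul_le_mul_of_nonneg_left hce (inv_pos.2 htjpos).le
        _ = ε := h2t
    have hujmem : uj ∈ closedBall v (2*ε) := by
      rw [mem_closedBall, dist_eq_norm]
      calc ‖uj - v‖ = ‖(ζ - v) + (-(tj⁻¹ • e))‖ := by congr 1; rw [huj]; abel
        _ ≤ ‖ζ - v‖ + ‖tj⁻¹ • e‖ := by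
            refine le_trans (norm_add_le _ _) ?_
            rw [norm_neg]
        _ ≤ 2*ε := by linarith
    have hfar : R₀ ≤ ‖p c‖ := by
      have hcz : ‖c - z‖ ≤ ‖v‖ + 2*ε := by
        have h3 : ‖c - z‖ ≤ ‖e‖ + ‖(t * (1 - (1/2:ℝ)^j)) • ζ‖ := by
          calc ‖c - z‖ = ‖e + (t * (1 - (1/2:ℝ)^j)) • ζ‖ := by congr 1; rw [he]; abel
          _ ≤ _ := norm_add_le _ _
        have ha0 : (0:ℝ) ≤ t * (1 - (1/2:ℝ)^j) := by nlinarith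
        have ha1 : t * (1 - (1/2:ℝ)^j) ≤ 1 := by nlinarith
        have h4 : ‖(t * (1 - (1/2:ℝ)^j)) • ζ‖ ≤ ‖ζ‖ := by
          rw [norm_smul, Real.norm_eq_abs, abs_of_nonneg ha0]
          exact mul_le_of_le_one_left (norm_nonneg ζ) ha1
        have h5 : ‖e‖ ≤ ε := by
          refine le_trans hce ?_
          nlinarith
        linarith
      have := hp z (c - z)
      rw [add_sub_cancel] at this
      linarith
    obtain ⟨ζj, hζj, hmemS⟩ := Hu uj hujmem c hcS hfar tj htjpos
      (by
        have h6 : tj ≤ t := by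
          rw [htj]
          exact mul_le_of_le_one_right ht0.le (pow_le_one₀ (by norm_num) (by norm_num))
        linarith)
    refine ⟨c + tj • ζj, hmemS, ?_⟩
    have keyalg : c + tj • ζj - (z + (t * (1 - (1/2:ℝ)^(j+1))) • ζ) = tj • (ζj - uj) := by
      have hsplit : (t * (1 - (1/2:ℝ)^(j+1))) = (t * (1 - (1/2:ℝ)^j)) + tj := by
        rw [htj]; ring
      rw [hsplit, add_smul, huj, smul_sub, smul_sub, smul_inv_smul₀ htjpos.ne']
      rw [he]; abel
    rw [keyalg, norm_smul, Real.norm_eq_abs, abs_of_pos htjpos]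
    calc tj * ‖ζj - uj‖ ≤ tj * (ε/4) := mul_le_mul_of_nonneg_left hζj htjpos.le
      _ ≤ ε/2 * (t * (1/2:ℝ)^(j+1)) := by rw [htj]; nlinarith
  choose! Fc hFc using step
  let cseq : ℕ → E := fun j => Nat.recAux z (fun j cj => Fc j cj) j
  have hcseq : ∀ j, Inv j (cseq j) := by
    intro j
    induction j with
    | zero => exact hInv0
    | succ j ih => exact hFc j _ ih
  have hlim : Tendsto cseq atTop (𝓝 (z + t • ζ)) := by
    rw [tendsto_iff_norm_sub_tendsto_zero]
    have hb : ∀ j, ‖cseq j - (z + t • ζ)‖ ≤ (ε/2 * t + t * ‖ζ‖) * (1/2:ℝ)^j := by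
      intro j
      have h1 := (hcseq j).2
      have h2 : cseq j - (z + t • ζ) =
          (cseq j - (z + (t * (1 - (1/2:ℝ)^j)) • ζ)) + (-((t * (1/2:ℝ)^j) • ζ)) := by
        have : (t * (1 - (1/2:ℝ)^j)) • ζ + (t * (1/2:ℝ)^j) • ζ = t • ζ := by
          rw [← add_smul]; ring_nf
        rw [← this]; abel
      rw [h2]
      refine le_trans (norm_add_le _ _) ?_
      rw [norm_neg, norm_smul, Real.norm_eq_abs, abs_of_nonneg (by positivity : (0:ℝ) ≤ t * (1/2:ℝ)^j)]
      nlinarith [h1]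
    refine squeeze_zero (fun j => norm_nonneg _) hb ?_
    have : Tendsto (fun j : ℕ => ((1:ℝ)/2)^j) atTop (𝓝 0) :=
      tendsto_pow_atTop_nhds_zero_of_lt_one (by norm_num) (by norm_num)
    simpa using this.const_mul (ε/2 * t + t * ‖ζ‖)
  exact hS.mem_of_tendsto hlim (Eventually.of_forall fun j => (hcseq j).1)
end ConeLemmas

section ERealLemmas

variable {n : ℕ}

lemma hp_id : ∀ z w : En n, ‖z‖ - ‖w‖ ≤ ‖z + w‖ := by
  intro z w
  have h1 : ‖z‖ ≤ ‖z + w‖ + ‖w‖ := by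
    calc ‖z‖ = ‖(z + w) - w‖ := by rw [add_sub_cancel_right]
    _ ≤ ‖z + w‖ + ‖w‖ := norm_sub_le _ _
  linarith

lemma hp_fst : ∀ z w : En n × ℝ, ‖z.1‖ - ‖w‖ ≤ ‖(z + w).1‖ := by
  intro z w
  have h1 : ‖z.1‖ ≤ ‖z.1 + w.1‖ + ‖w.1‖ := by
    calc ‖z.1‖ = ‖(z.1 + w.1) - w.1‖ := by rw [add_sub_cancel_right]
    _ ≤ ‖z.1 + w.1‖ + ‖w.1‖ := norm_sub_le _ _
  have h2 : ‖w.1‖ ≤ ‖w‖ := norm_fst_le w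
  simp only [Prod.fst_add]
  linarith

lemma dq_eq_top_of_bot {f : En n → EReal} {x : En n} {t : ℝ} (ht : 0 < t) (w : En n)
    (hx : f x = ⊥) : dq f x t w = ⊤ := by
  rw [dq, esub, if_pos (Or.inr hx)]
  exact EReal.top_div_of_pos_ne_top (by exact_mod_cast ht) (EReal.coe_ne_top t)

lemma dq_eq_top_of_top {f : En n → EReal} {x : En n} {t : ℝ} (ht : 0 < t) {w : En n}
    (hx2 : f (x + t • w) = ⊤) : dq f x t w = ⊤ := by
  rw [dq, esub, if_pos (Or.inl hx2)]
  exact EReal.top_div_of_pos_ne_top (by exact_mod_cast ht) (EReal.coe_ne_top t)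

lemma ne_top_of_dq_lt {f : En n → EReal} {x : En n} {t : ℝ} (ht : 0 < t) {w : En n} {c : ℝ}
    (h : dq f x t w < (c : EReal)) : f (x + t • w) ≠ ⊤ := by
  intro htop
  rw [dq_eq_top_of_top ht htop] at h
  exact (not_top_lt h)

lemma le_of_dq_lt {f : En n → EReal} {x : En n} {t : ℝ} (ht : 0 < t) {w : En n} {b c : ℝ}
    (hb : f x = (b : ℝ)) (h : dq f x t w < (c : EReal)) :
    f (x + t • w) ≤ ((b + c * t : ℝ) : EReal) := by
  have hne := ne_top_of_dq_lt ht h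
  by_cases hbot : f (x + t • w) = ⊥
  · rw [hbot]; exact bot_le
  · obtain ⟨a, ha⟩ : ∃ a : ℝ, f (x + t • w) = (a : EReal) :=
      ⟨(f (x + t • w)).toReal, (EReal.coe_toReal hne hbot).symm⟩
    rw [dq, ha, hb, esub, if_neg (by simp), ← EReal.coe_sub, ← EReal.coe_div,
      EReal.coe_lt_coe_iff, div_lt_iff₀ ht] at h
    rw [ha, EReal.coe_le_coe_iff]
    linarith

lemma limsup_eps_le_upSub {f : En n → EReal} {v : En n} {ε : ℝ} (hε : 0 < ε) :
    Filter.limsup (fun q : En n × ℝ => ⨅ w ∈ closedBall v ε, dq f q.1 q.2 w)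
      (atInfty n ×ˢ 𝓝[>] (0:ℝ)) ≤ upSub f v := by
  exact le_iSup₂ (f := fun (ε : ℝ) (_ : 0 < ε) =>
    Filter.limsup (fun q : En n × ℝ => ⨅ w ∈ closedBall v ε, dq f q.1 q.2 w)
      (atInfty n ×ˢ 𝓝[>] (0:ℝ))) ε hε

lemma upSub_data {f : En n → EReal} {v : En n} {c : ℝ} (h : upSub f v < (c : EReal))
    {ε : ℝ} (hε : 0 < ε) :
    ∃ R δ : ℝ, 0 < δ ∧ ∀ x' : En n, R ≤ ‖x'‖ → ∀ t : ℝ, 0 < t → t < δ →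
      ∃ w, ‖w - v‖ ≤ ε ∧ dq f x' t w < (c : EReal) := by
  have hls := lt_of_le_of_lt (limsup_eps_le_upSub (f := f) (v := v) hε) h
  have hev := eventually_lt_of_limsup_lt hls
  rw [eventually_prod_iff] at hev
  obtain ⟨pa, hpa, pb, hpb, hpq⟩ := hev
  rw [atInfty, eventually_comap] at hpa
  rw [eventually_atTop] at hpa
  obtain ⟨R, hR⟩ := hpa
  obtain ⟨δ, hδmem, hδ⟩ := mem_nhdsGT_iff_exists_Ioo_subset.1 hpb
  refine ⟨R, δ, hδmem, ?_⟩
  intro x' hx' t ht0 htδ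
  have hpax : pa x' := hR ‖x'‖ hx' x' rfl
  have hpbt : pb t := hδ ⟨ht0, htδ⟩
  have hlt : (⨅ w ∈ closedBall v ε, dq f x' t w) < (c : EReal) := hpq hpax hpbt
  by_contra hcon
  push_neg at hcon
  have : (c : EReal) ≤ ⨅ w ∈ closedBall v ε, dq f x' t w := by
    refine le_iInf₂ ?_
    intro w hw
    exact hcon w (by rwa [mem_closedBall, dist_eq_norm] at hw)
  exact absurd hlt (not_lt.2 this)

lemma vert_mem_Tepi (f : En n → EReal) {r : ℝ} (hr : 0 ≤ r) : ((0 : En n), r) ∈ Tepi f := by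
  intro xy t hmem hfst ht0 ht
  refine ⟨fun _ => ((0 : En n), r), tendsto_const_nhds, fun k => ?_⟩
  have hk := hmem k
  simp only [epig, Set.mem_setOf_eq] at hk ⊢
  have h1 : (xy k + t k • ((0 : En n), r)) = ((xy k).1, (xy k).2 + t k * r) := by
    ext
    · simp
    · simp [smul_eq_mul]
  rw [h1]
  refine le_trans hk ?_
  rw [EReal.coe_le_coe_iff]
  show (xy k).2 ≤ (xy k).2 + t k * r
  nlinarith [(ht0 k).le, mul_nonneg (ht0 k).le hr]

lemma Tepi_upward {f : En n → EReal} {q : En n × ℝ} (hq : q ∈ Tepi f) {s : ℝ} (hs : q.2 ≤ s) :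
    (q.1, s) ∈ Tepi f := by
  have h := tcai_add hp_fst hq (vert_mem_Tepi f (show (0:ℝ) ≤ s - q.2 by linarith))
  have he : q + ((0 : En n), s - q.2) = (q.1, s) := by
    ext <;> simp
  rwa [he] at h

end ERealLemmas
section MainLemmas

variable {n : ℕ}

lemma mem_Tepi_of_upSub_lt {f : En n → EReal} {v : En n} {c : ℝ}
    (h : upSub f v < (c : EReal)) : (v, c) ∈ Tepi f := by
  classical
  have hdata : ∀ i : ℕ, ∃ R δ : ℝ, 0 < δ ∧ ∀ x' : En n, R ≤ ‖x'‖ → ∀ t : ℝ, 0 < t → t < δ →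
      ∃ w, ‖w - v‖ ≤ 1/(i+1) ∧ dq f x' t w < (c : EReal) := fun i => upSub_data h (by positivity)
  choose R δ hδ hD using hdata
  intro xy t hmem hfst ht0 ht
  have hKex : ∀ i : ℕ, ∃ K : ℕ, ∀ k, K ≤ k → R i ≤ ‖(xy k).1‖ ∧ t k < δ i := by
    intro i
    have h1 : ∀ᶠ k in atTop, R i ≤ ‖(xy k).1‖ := hfst.eventually_ge_atTop (R i)
    have h2 : ∀ᶠ k in atTop, t k < δ i := ht.eventually_lt_const (hδ i)
    rw [← eventually_atTop]
    exact h1.and h2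
  choose K hK using hKex
  set M : ℕ → ℕ := fun i => i + Finset.sup (Finset.range (i+1)) K with hM
  have hMK : ∀ i, K i ≤ M i := fun i =>
    le_trans (Finset.le_sup (Finset.mem_range.2 (Nat.lt_succ_self i))) (Nat.le_add_left _ _)
  have hMi : ∀ i, i ≤ M i := fun i => Nat.le_add_right _ _
  set idx : ℕ → ℕ := fun k => Nat.findGreatest (fun i => M i ≤ k) k with hidx
  have hgood : ∀ k, M 0 ≤ k → (R (idx k) ≤ ‖(xy k).1‖ ∧ t k < δ (idx k)) := by
    intro k hk
    have hPidx : M (idx k) ≤ k :=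
      Nat.findGreatest_spec (P := fun i => M i ≤ k) (Nat.zero_le k) hk
    exact hK (idx k) k (le_trans (hMK (idx k)) hPidx)
  have hidx_ge : ∀ i k, M i ≤ k → i ≤ idx k :=
    fun i k hk => Nat.le_findGreatest (le_trans (hMi i) hk) hk
  have hWex : ∀ k, ∃ W : En n × ℝ, (xy k + t k • W ∈ epig f) ∧
      (M 0 ≤ k → ‖W.1 - v‖ ≤ 1/(idx k + 1) ∧ W.2 = c) := by
    intro k
    by_cases hk : M 0 ≤ k
    · obtain ⟨hR', ht'⟩ := hgood k hk
      obtain ⟨w, hw, hdq⟩ := hD (idx k) ((xy k).1) hR' (t k) (ht0 k) ht'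
      have hfb : f ((xy k).1) ≠ ⊥ := by
        intro hb
        rw [dq_eq_top_of_bot (ht0 k) w hb] at hdq
        exact not_top_lt hdq
      have hft : f ((xy k).1) ≠ ⊤ := ne_top_of_le_ne_top (EReal.coe_ne_top _) (hmem k)
      obtain ⟨b, hb⟩ : ∃ b : ℝ, f ((xy k).1) = (b:EReal) := ⟨_, (EReal.coe_toReal hft hfb).symm⟩
      refine ⟨(w, c), ?_, fun _ => ⟨hw, rfl⟩⟩
      have hle := le_of_dq_lt (ht0 k) hb hdq
      have hb2 : b ≤ (xy k).2 := by
        have h' := hmem k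
        simp only [epig, Set.mem_setOf_eq] at h'
        rw [hb] at h'
        exact_mod_cast h'
      show f ((xy k + t k • (w, c)).1) ≤ (((xy k + t k • (w, c)).2 : ℝ) : EReal)
      have hc1 : (xy k + t k • (w, c)).1 = (xy k).1 + t k • w := rfl
      have hc2 : (xy k + t k • (w, c)).2 = (xy k).2 + t k * c := rfl
      rw [hc1, hc2]
      refine le_trans hle ?_
      rw [EReal.coe_le_coe_iff]
      nlinarith [(ht0 k).le]
    · refine ⟨(0, 0), ?_, fun h' => absurd h' hk⟩
      show f _ ≤ _
      have he : xy k + t k • ((0:En n), (0:ℝ)) = xy k := by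
        ext <;> simp
      rw [he]
      exact hmem k
  choose W hW1 hW2 using hWex
  refine ⟨W, ?_, hW1⟩
  have hidxtop : Tendsto idx atTop atTop := by
    refine tendsto_atTop.2 fun i => ?_
    rw [eventually_atTop]
    exact ⟨M i, fun k hk => hidx_ge i k hk⟩
  have h2 : Tendsto (fun k => (W k).2) atTop (𝓝 c) := by
    refine Tendsto.congr' ?_ (tendsto_const_nhds : Tendsto (fun _ : ℕ => c) atTop (𝓝 c))
    filter_upwards [eventually_atTop.2 ⟨M 0, fun k hk => hk⟩] with k hk
    exact ((hW2 k hk).2).symm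
  have h1 : Tendsto (fun k => (W k).1) atTop (𝓝 v) := by
    rw [tendsto_iff_norm_sub_tendsto_zero]
    refine squeeze_zero' ?_ ?_
      ((tendsto_one_div_add_atTop_nhds_zero_nat).comp hidxtop)
    · exact Eventually.of_forall fun k => norm_nonneg _
    · filter_upwards [eventually_atTop.2 ⟨M 0, fun k (hk : M 0 ≤ k) => hk⟩] with k hk
      exact_mod_cast (hW2 k hk).1
  have := h1.prodMk_nhds h2
  simpa using this
lemma f_ne_bot_far {f : En n → EReal} {v₀ : En n} (h : upSub f v₀ < ⊤) :
    ∃ R : ℝ, ∀ x' : En n, R ≤ ‖x'‖ → f x' ≠ ⊥ := by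
  obtain ⟨c, hc, -⟩ := EReal.exists_between_coe_real h
  obtain ⟨R, δ, hδ, hD⟩ := upSub_data hc one_pos
  refine ⟨R, fun x' hx' hbot => ?_⟩
  obtain ⟨w, -, hdq⟩ := hD x' hx' (δ/2) (by linarith) (by linarith)
  rw [dq_eq_top_of_bot (by linarith : (0:ℝ) < δ/2) w hbot] at hdq
  exact not_top_lt hdq

/-- Lemma A : the tangent cone at infinity of the "epigraph of `f + δ_C`" has nonnegative
last coordinates, provided the constrained infimum is real and approached at infinity. -/
lemma TepiG_nonneg {f : En n → EReal} {C : Set (En n)} {m' : ℝ}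
    (hCm : ∀ z ∈ C, (m' : EReal) ≤ f z)
    (x : ℕ → En n) (hxC : ∀ k, x k ∈ C) (hx : Tendsto (fun k => ‖x k‖) atTop atTop)
    (hfx : Tendsto (fun k => f (x k)) atTop (𝓝 (m' : EReal))) :
    ∀ q ∈ tangentConeAtInfty Prod.fst {p : En n × ℝ | p.1 ∈ C ∧ f p.1 ≤ (p.2 : EReal)},
      (0:ℝ) ≤ q.2 := by
  intro q hq
  -- eventually f (x k) is a real number close to m'
  have hev : ∀ᶠ k in atTop, f (x k) ∈ Ioo ((m' - 1 : ℝ) : EReal) ((m' + 1 : ℝ) : EReal) := by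
    refine hfx.eventually (isOpen_Ioo.mem_nhds ?_)
    constructor <;> [exact_mod_cast (by linarith : m' - 1 < m'); exact_mod_cast (by linarith : m' < m' + 1)]
  obtain ⟨K, hK⟩ := eventually_atTop.1 hev
  set X : ℕ → En n := fun k => x (k + K) with hX
  have hXC : ∀ k, X k ∈ C := fun k => hxC _
  have hfin : ∀ k, f (X k) ≠ ⊥ ∧ f (X k) ≠ ⊤ := by
    intro k
    have := hK (k + K) (Nat.le_add_left _ _)
    exact ⟨fun hb => by rw [hb] at this; exact absurd this.1 (by simp),
      fun ht => by rw [ht] at this; exact absurd this.2 (by simp)⟩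
  set b : ℕ → ℝ := fun k => (f (X k)).toReal with hb
  have hbf : ∀ k, f (X k) = ((b k : ℝ) : EReal) := fun k =>
    (EReal.coe_toReal (hfin k).2 (hfin k).1).symm
  have hbm : ∀ k, m' ≤ b k := by
    intro k
    have := hCm (X k) (hXC k)
    rw [hbf k] at this
    exact_mod_cast this
  have hbtend : Tendsto b atTop (𝓝 m') := by
    have h1 : Tendsto (fun k => f (X k)) atTop (𝓝 ((m' : ℝ) : EReal)) :=
      hfx.comp (tendsto_add_atTop_nat K)
    have h2 := (EReal.tendsto_toReal (EReal.coe_ne_top m') (EReal.coe_ne_bot m')).comp h1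
    simpa [EReal.toReal_coe, Function.comp_def, hb] using h2
  set τ : ℕ → ℝ := fun k => max (Real.sqrt (b k - m')) (1/(k+1)) with hτ
  have hτ0 : ∀ k, 0 < τ k := fun k => lt_max_of_lt_right (by positivity)
  have hτtend : Tendsto τ atTop (𝓝 0) := by
    have h1 : Tendsto (fun k => Real.sqrt (b k - m')) atTop (𝓝 0) := by
      have h2 : Tendsto (fun k => b k - m') atTop (𝓝 0) := by
        simpa using hbtend.sub_const m'
      have := (Real.continuous_sqrt.tendsto 0).comp h2
      simpa [Function.comp_def] using this
    have h4 := h1.max tendsto_one_div_add_atTop_nhds_zero_nat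
    simp only [max_self] at h4
    exact h4
  have hXnorm : Tendsto (fun k => ‖(fun k => ((X k, b k) : En n × ℝ)) k |>.1‖) atTop atTop := by
    exact hx.comp (tendsto_add_atTop_nat K)
  obtain ⟨W, hWt, hWm⟩ := hq (fun k => (X k, b k)) τ
    (fun k => ⟨hXC k, le_of_eq (hbf k)⟩) hXnorm hτ0 hτtend
  -- from membership : m' ≤ b k + τ k * (W k).2
  have hkey : ∀ k, -(τ k) ≤ (W k).2 := by
    intro k
    have hm := hWm k
    obtain ⟨hmC, hmf⟩ := hm
    have hge : (m' : EReal) ≤ ((b k + τ k * (W k).2 : ℝ) : EReal) := by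
      refine le_trans (hCm _ hmC) (le_trans hmf ?_)
      exact le_of_eq rfl
    have hge' : m' ≤ b k + τ k * (W k).2 := by exact_mod_cast hge
    -- b k - m' ≤ τ k ^ 2
    have hsq : b k - m' ≤ τ k ^ 2 := by
      have h1 : Real.sqrt (b k - m') ≤ τ k := le_max_left _ _
      have h2 : 0 ≤ b k - m' := by linarith [hbm k]
      nlinarith [Real.sq_sqrt h2, Real.sqrt_nonneg (b k - m')]
    have hτpos := hτ0 k
    rw [← sub_nonneg] at hge'
    -- τ k * (W k).2 ≥ m' - b k ≥ -τ^2
    nlinarith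
  have hW2 : Tendsto (fun k => (W k).2) atTop (𝓝 q.2) := by
    have := (continuous_snd.tendsto q).comp hWt
    simpa [Function.comp_def] using this
  have hneg : Tendsto (fun k => -(τ k)) atTop (𝓝 0) := by
    simpa using hτtend.neg
  exact le_of_tendsto_of_tendsto' hneg hW2 hkey
lemma uniformM {f : En n → EReal} {v₀ : En n} {σ : ℝ} (hσ : 0 < σ)
    (hball : ∀ u ∈ ball v₀ σ, upSub f u < ⊤) :
    ∃ M ρ : ℝ, 0 < ρ ∧ ∀ u ∈ closedBall v₀ ρ, (u, M) ∈ Tepi f := by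
  classical
  set Sset : En n → Set ℝ := fun u => {c | 0 ≤ c ∧ (u, c) ∈ Tepi f} with hSset
  have hSne : ∀ u ∈ ball v₀ σ, (Sset u).Nonempty := by
    intro u hu
    obtain ⟨c, hc, -⟩ := EReal.exists_between_coe_real (hball u hu)
    have h1 : (u, c) ∈ Tepi f := mem_Tepi_of_upSub_lt hc
    have h2 : (u, max c 0) ∈ Tepi f := Tepi_upward h1 (le_max_left _ _)
    exact ⟨max c 0, le_max_right _ _, h2⟩
  have hSbdd : ∀ u, BddBelow (Sset u) := fun u => ⟨0, fun c hc => hc.1⟩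
  set h : En n → ℝ := fun u => sInf (Sset u) with hdef
  have hh0 : ∀ u ∈ ball v₀ σ, ∀ c' : ℝ, h u < c' → (u, c') ∈ Tepi f := by
    intro u hu c' hc'
    obtain ⟨a, ha, hac⟩ := exists_lt_of_csInf_lt (hSne u hu) hc'
    exact Tepi_upward ha.2 hac.le
  have hconv : ConvexOn ℝ (ball v₀ σ) h := by
    refine ⟨convex_ball _ _, ?_⟩
    intro u1 hu1 u2 hu2 a b ha hb hab
    refine le_of_forall_pos_le_add fun η hη => ?_
    obtain ⟨c1, hc1S, hc1⟩ := exists_lt_of_csInf_lt (hSne u1 hu1)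
      (lt_add_of_pos_right (h u1) hη)
    obtain ⟨c2, hc2S, hc2⟩ := exists_lt_of_csInf_lt (hSne u2 hu2)
      (lt_add_of_pos_right (h u2) hη)
    have hmem : (a • u1 + b • u2, a * c1 + b * c2) ∈ Tepi f := by
      have := tcai_combo hp_fst hc1S.2 hc2S.2 ha hb
      have hpair : a • ((u1, c1) : En n × ℝ) + b • ((u2, c2) : En n × ℝ)
          = (a • u1 + b • u2, a * c1 + b * c2) := by
        ext <;> simp [smul_eq_mul]
      rwa [hpair] at this
    have hnn : 0 ≤ a * c1 + b * c2 := by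
      have := hc1S.1; have := hc2S.1
      positivity
    have hle : h (a • u1 + b • u2) ≤ a * c1 + b * c2 :=
      csInf_le (hSbdd _) ⟨hnn, hmem⟩
    calc h (a • u1 + b • u2) ≤ a * c1 + b * c2 := hle
      _ ≤ a * (h u1 + η) + b * (h u2 + η) := by
          refine add_le_add (mul_le_mul_of_nonneg_left hc1.le ha)
            (mul_le_mul_of_nonneg_left hc2.le hb)
      _ = a • h u1 + b • h u2 + η := by
          simp only [smul_eq_mul]; nlinarith [hab]
  have hcont : ContinuousOn h (ball v₀ σ) := hconv.continuousOn isOpen_ball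
  have hca : ContinuousAt h v₀ :=
    hcont.continuousAt (isOpen_ball.mem_nhds (mem_ball_self hσ))
  have hev : ∀ᶠ u in 𝓝 v₀, h u < h v₀ + 1 :=
    hca.eventually_lt_const (by linarith)
  obtain ⟨ρ', hρ', hρ'h⟩ := Metric.eventually_nhds_iff.1 hev
  refine ⟨h v₀ + 1, min (ρ'/2) (σ/2), by positivity, ?_⟩
  intro u hu
  rw [mem_closedBall] at hu
  have hu1 : u ∈ ball v₀ σ := by
    rw [mem_ball]
    calc dist u v₀ ≤ min (ρ'/2) (σ/2) := hu
      _ ≤ σ/2 := min_le_right _ _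
      _ < σ := by linarith
  have hu2 : h u < h v₀ + 1 := hρ'h (by
    calc dist u v₀ ≤ min (ρ'/2) (σ/2) := hu
      _ ≤ ρ'/2 := min_le_left _ _
      _ < ρ' := by linarith)
  exact hh0 u hu1 _ hu2
lemma epig_closed {f : En n → EReal} (hlsc : LowerSemicontinuous f) : IsClosed (epig f) := by
  rw [← isOpen_compl_iff, isOpen_iff_mem_nhds]
  intro q hq
  simp only [mem_compl_iff, epig, mem_setOf_eq, not_le] at hq
  obtain ⟨c, hc1, hc2⟩ := EReal.exists_between_coe_real hq
  have hc1' : q.2 < c := by exact_mod_cast hc1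
  have h1 : ∀ᶠ z : En n × ℝ in 𝓝 q, (c : EReal) < f z.1 :=
    (continuous_fst.tendsto q).eventually (hlsc q.1 (c : EReal) hc2)
  have h2 : ∀ᶠ z : En n × ℝ in 𝓝 q, z.2 < c :=
    (continuous_snd.tendsto q).eventually (eventually_of_mem (Iio_mem_nhds hc1') fun y hy => hy)
  filter_upwards [h1, h2] with z hz1 hz2
  simp only [mem_compl_iff, epig, mem_setOf_eq, not_le]
  exact lt_trans (by exact_mod_cast hz2) hz1

lemma fhyper {f : En n → EReal} (hlsc : LowerSemicontinuous f) {v₀ : En n} {σ : ℝ} (hσ : 0 < σ)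
    (hball : ∀ u ∈ ball v₀ σ, upSub f u < ⊤) :
    ∃ (M₂ ε₁ R₁ δ₁ : ℝ), 0 < ε₁ ∧ 0 < δ₁ ∧
      ∀ z ∈ epig f, R₁ ≤ ‖z.1‖ → ∀ t : ℝ, 0 < t → t ≤ δ₁ → ∀ d : En n, ‖d - v₀‖ ≤ ε₁ →
        z + t • ((d, M₂) : En n × ℝ) ∈ epig f := by
  obtain ⟨M, ρ, hρ, hM⟩ := uniformM hσ hball
  set ρ' := min ρ 1 with hρ'def
  have hρ' : 0 < ρ' := lt_min hρ one_pos
  have hρ'ρ : ρ' ≤ ρ := min_le_left _ _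
  have hsub : closedBall ((v₀, M + ρ') : En n × ℝ) (2*(ρ'/4)) ⊆ Tepi f := by
    intro q hq
    rw [mem_closedBall, Prod.dist_eq, max_le_iff] at hq
    obtain ⟨h1, h2⟩ := hq
    have hq1 : q.1 ∈ closedBall v₀ ρ := by
      rw [mem_closedBall]
      calc dist q.1 v₀ ≤ 2*(ρ'/4) := h1
        _ ≤ ρ := by linarith
    have hq2 : M ≤ q.2 := by
      rw [Real.dist_eq, abs_le] at h2
      linarith [h2.1]
    have h3 := Tepi_upward (hM q.1 hq1) hq2
    simpa using h3
  obtain ⟨R₁, δ₁, hδ₁, HFH⟩ := tcai_hyper (epig_closed hlsc) hp_fst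
    (by positivity : (0:ℝ) < ρ'/4) hsub
  refine ⟨M + ρ', ρ'/4, R₁, δ₁, by positivity, hδ₁, ?_⟩
  intro z hz hR t ht0 htδ d hd
  refine HFH z hz hR t ht0 htδ ((d, M + ρ') : En n × ℝ) ?_
  have he : ((d, M + ρ') : En n × ℝ) - (v₀, M + ρ') = (d - v₀, 0) := by
    ext <;> simp
  rw [he, Prod.norm_def]
  simp only [norm_zero]
  exact max_le hd (by positivity)
lemma combo_mem_TepiG1 {f : En n → EReal} {C : Set (En n)} {q : En n × ℝ}
    (hq : q ∈ Tepi f) {εh Rh δh : ℝ} (hεh : 0 < εh) (hδh : 0 < δh)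
    (hypC : ∀ z ∈ C, Rh ≤ ‖z‖ → ∀ t : ℝ, 0 < t → t ≤ δh →
      ∀ ζ : En n, ‖ζ - q.1‖ ≤ εh → z + t • ζ ∈ C) :
    q ∈ tangentConeAtInfty Prod.fst {p : En n × ℝ | p.1 ∈ C ∧ f p.1 ≤ (p.2 : EReal)} := by
  classical
  intro XY τ hXY hfst hτ0 hτ
  obtain ⟨W, hWt, hWm⟩ := hq XY τ (fun k => (hXY k).2) hfst hτ0 hτ
  set good : ℕ → Prop := fun k => ‖(W k).1 - q.1‖ ≤ εh ∧ Rh ≤ ‖(XY k).1‖ ∧ τ k ≤ δh with hgood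
  set W' : ℕ → En n × ℝ := fun k => if good k then W k else 0 with hW'
  have hgev : ∀ᶠ k in atTop, good k := by
    have h1 : Tendsto (fun k => ‖(W k).1 - q.1‖) atTop (𝓝 0) := by
      have := ((continuous_fst.tendsto q).comp hWt).sub_const q.1
      simpa using this.norm
    have h2 : ∀ᶠ k in atTop, τ k ≤ δh := (hτ.eventually_lt_const hδh).mono fun k hk => hk.le
    filter_upwards [h1.eventually_le_const hεh, hfst.eventually_ge_atTop Rh, h2] with k ha hb hc
    exact ⟨ha, hb, hc⟩
  have hmem : ∀ k, XY k + τ k • W' k ∈ {p : En n × ℝ | p.1 ∈ C ∧ f p.1 ≤ (p.2 : EReal)} := by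
    intro k
    by_cases hg : good k
    · rw [hW']
      simp only [if_pos hg]
      refine ⟨?_, hWm k⟩
      show (XY k).1 + τ k • (W k).1 ∈ C
      exact hypC _ (hXY k).1 hg.2.1 (τ k) (hτ0 k) hg.2.2 _ hg.1
    · rw [hW']
      simp only [if_neg hg, smul_zero, add_zero]
      exact hXY k
  refine ⟨W', ?_, hmem⟩
  refine hWt.congr' ?_
  filter_upwards [hgev] with k hk
  rw [hW']
  simp only [if_pos hk]

lemma combo_mem_TepiG2 {f : En n → EReal} {C : Set (En n)} {a : En n × ℝ} {ub v₀ : En n}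
    (ha : a ∈ Tepi f) (hub : ub ∈ tangentConeAtInfty (fun x : En n => x) C)
    {lam M₂ ε₁ R₁ δ₁ : ℝ} (hlam : 0 < lam) (hε₁ : 0 < ε₁) (hδ₁ : 0 < δ₁)
    (HFH : ∀ z ∈ epig f, R₁ ≤ ‖z.1‖ → ∀ t : ℝ, 0 < t → t ≤ δ₁ → ∀ d : En n, ‖d - v₀‖ ≤ ε₁ →
        z + t • ((d, M₂) : En n × ℝ) ∈ epig f)
    (hdir : ‖(lam⁻¹ • (ub - a.1)) - v₀‖ ≤ ε₁/2) :
    ((ub, a.2 + lam * M₂) : En n × ℝ) ∈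
      tangentConeAtInfty Prod.fst {p : En n × ℝ | p.1 ∈ C ∧ f p.1 ≤ (p.2 : EReal)} := by
  classical
  intro XY τ hXY hfst hτ0 hτ
  obtain ⟨W, hWt, hWm⟩ := ha XY τ (fun k => (hXY k).2) hfst hτ0 hτ
  obtain ⟨U, hUt, hUc⟩ := hub (fun k => (XY k).1) τ (fun k => (hXY k).1) hfst hτ0 hτ
  set d : ℕ → En n := fun k => lam⁻¹ • (U k - (W k).1) with hd
  set good : ℕ → Prop := fun k =>
    ‖d k - v₀‖ ≤ ε₁ ∧ R₁ ≤ ‖(XY k).1 + τ k • (W k).1‖ ∧ lam * τ k ≤ δ₁ with hgood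
  set W' : ℕ → En n × ℝ := fun k => if good k then (U k, (W k).2 + lam * M₂) else 0 with hW'
  have hW1t : Tendsto (fun k => (W k).1) atTop (𝓝 a.1) := (continuous_fst.tendsto a).comp hWt
  have hW2t : Tendsto (fun k => (W k).2) atTop (𝓝 a.2) := (continuous_snd.tendsto a).comp hWt
  have hmem : ∀ k, XY k + τ k • W' k ∈ {p : En n × ℝ | p.1 ∈ C ∧ f p.1 ≤ (p.2 : EReal)} := by
    intro k
    by_cases hg : good k
    · have hz : (XY k + τ k • W k) ∈ epig f := hWm k
      have hfh := HFH _ hz hg.2.1 (lam * τ k) (mul_pos hlam (hτ0 k)) hg.2.2 (d k) hg.1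
      have hco : (lam * τ k) * lam⁻¹ = τ k := by
        field_simp
      have hpt : XY k + τ k • W k + (lam * τ k) • ((d k, M₂) : En n × ℝ)
          = XY k + τ k • ((U k, (W k).2 + lam * M₂) : En n × ℝ) := by
        have hfsteq : (XY k).1 + τ k • (W k).1 + (lam * τ k) • (d k)
            = (XY k).1 + τ k • (U k) := by
          rw [hd, smul_smul, hco, smul_sub]
          abel
        have hsndeq : (XY k).2 + τ k * (W k).2 + (lam * τ k) * M₂
            = (XY k).2 + τ k * ((W k).2 + lam * M₂) := by ring
        exact Prod.ext hfsteq hsndeq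
      rw [hW']
      simp only [if_pos hg]
      constructor
      · show (XY k).1 + τ k • U k ∈ C
        exact hUc k
      · show f ((XY k + τ k • ((U k, (W k).2 + lam * M₂) : En n × ℝ)).1)
          ≤ (((XY k + τ k • ((U k, (W k).2 + lam * M₂) : En n × ℝ)).2 : ℝ) : EReal)
        rw [← hpt]
        exact hfh
    · rw [hW']
      simp only [if_neg hg, smul_zero, add_zero]
      exact hXY k
  have hdk : Tendsto d atTop (𝓝 (lam⁻¹ • (ub - a.1))) := by
    rw [hd]
    exact (hUt.sub hW1t).const_smul _
  have hgev : ∀ᶠ k in atTop, good k := by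
    have h1 : ∀ᶠ k in atTop, ‖d k - v₀‖ ≤ ε₁ := by
      have hn : Tendsto (fun k => ‖d k - lam⁻¹ • (ub - a.1)‖) atTop (𝓝 0) := by
        have := hdk.sub_const (lam⁻¹ • (ub - a.1))
        simpa using this.norm
      filter_upwards [hn.eventually_le_const (by linarith : (0:ℝ) < ε₁/2)] with k hk
      calc ‖d k - v₀‖ = ‖(d k - lam⁻¹ • (ub - a.1)) + (lam⁻¹ • (ub - a.1) - v₀)‖ := by
            congr 1; abel
        _ ≤ ‖d k - lam⁻¹ • (ub - a.1)‖ + ‖lam⁻¹ • (ub - a.1) - v₀‖ := norm_add_le _ _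
        _ ≤ ε₁/2 + ε₁/2 := add_le_add hk hdir
        _ = ε₁ := by ring
    have h2 : ∀ᶠ k in atTop, R₁ ≤ ‖(XY k).1 + τ k • (W k).1‖ := by
      have htw : Tendsto (fun k => τ k • (W k).1) atTop (𝓝 0) := by
        simpa using hτ.smul hW1t
      have hb : ∀ᶠ k in atTop, ‖τ k • (W k).1‖ ≤ 1 := by
        have := htw.norm
        simp only [norm_zero] at this
        exact this.eventually_le_const one_pos
      have hbig : Tendsto (fun k => ‖(XY k).1 + τ k • (W k).1‖) atTop atTop := by
        refine tendsto_atTop_mono' _ ?_ (tendsto_atTop_add_const_right _ (-1) hfst)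
        filter_upwards [hb] with k hk
        have := hp_id ((XY k).1) (τ k • (W k).1)
        linarith
      exact hbig.eventually_ge_atTop R₁
    have h3 : ∀ᶠ k in atTop, lam * τ k ≤ δ₁ := by
      have : Tendsto (fun k => lam * τ k) atTop (𝓝 0) := by
        simpa using hτ.const_mul lam
      exact (this.eventually_lt_const hδ₁).mono fun k hk => hk.le
    filter_upwards [h1, h2, h3] with k ha hb hc
    exact ⟨ha, hb, hc⟩
  refine ⟨W', ?_, hmem⟩
  have hWt' : Tendsto (fun k => ((U k, (W k).2 + lam * M₂) : En n × ℝ)) atTop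
      (𝓝 (ub, a.2 + lam * M₂)) := by
    exact hUt.prodMk_nhds (hW2t.add_const (lam * M₂))
  refine hWt'.congr' ?_
  filter_upwards [hgev] with k hk
  rw [hW']
  simp only [if_pos hk]
lemma m_ne_top_case1 {f : En n → EReal} {C : Set (En n)} (hCcl : IsClosed C)
    {v₀ : En n} (hv₀D : upSub f v₀ < ⊤) {ρ₀ : ℝ} (hρ₀ : 0 < ρ₀)
    (hsub : closedBall v₀ ρ₀ ⊆ tangentConeAtInfty (fun x : En n => x) C)
    (x : ℕ → En n) (hxC : ∀ k, x k ∈ C) (hx : Tendsto (fun k => ‖x k‖) atTop atTop)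
    (htopC : ∀ z ∈ C, f z = ⊤) : False := by
  obtain ⟨c, hc, -⟩ := EReal.exists_between_coe_real hv₀D
  obtain ⟨Rh, δh, hδh, hypC⟩ := tcai_hyper hCcl hp_id (show (0:ℝ) < ρ₀/4 by positivity)
    (by
      refine subset_trans (closedBall_subset_closedBall ?_) hsub
      linarith)
  obtain ⟨Rc, δc, hδc, hD⟩ := upSub_data hc (show (0:ℝ) < ρ₀/4 by positivity)
  obtain ⟨k, hk⟩ := (hx.eventually_ge_atTop (max Rh Rc)).exists
  set t := min δh δc / 2 with htdef
  have ht0 : 0 < t := by positivity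
  obtain ⟨w, hw, hdq⟩ := hD (x k) (le_trans (le_max_right _ _) hk) t ht0
    (by
      have : t ≤ δc / 2 := by
        rw [htdef]
        have := min_le_right δh δc
        linarith
      linarith)
  have hmemC : x k + t • w ∈ C := hypC (x k) (hxC k) (le_trans (le_max_left _ _) hk) t ht0
    (by
      rw [htdef]
      have := min_le_left δh δc
      linarith) w hw
  rw [dq_eq_top_of_top ht0 (htopC _ hmemC)] at hdq
  exact not_top_lt hdq

lemma m_ne_top_case2 {f : En n → EReal} {C : Set (En n)}
    {v₀ : En n} (hv₀T : v₀ ∈ tangentConeAtInfty (fun x : En n => x) C)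
    (hv₀D : upSub f v₀ < ⊤)
    {M₂ ε₁ R₁ δ₁ : ℝ} (hε₁ : 0 < ε₁) (hδ₁ : 0 < δ₁)
    (HFH : ∀ z ∈ epig f, R₁ ≤ ‖z.1‖ → ∀ t : ℝ, 0 < t → t ≤ δ₁ → ∀ d : En n, ‖d - v₀‖ ≤ ε₁ →
        z + t • ((d, M₂) : En n × ℝ) ∈ epig f)
    (x : ℕ → En n) (hxC : ∀ k, x k ∈ C) (hx : Tendsto (fun k => ‖x k‖) atTop atTop)
    (htopC : ∀ z ∈ C, f z = ⊤) : False := by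
  obtain ⟨c, hc, -⟩ := EReal.exists_between_coe_real hv₀D
  obtain ⟨Rc, δc, hδc, hD⟩ := upSub_data hc hε₁
  obtain ⟨Rb, hRb⟩ := f_ne_bot_far hv₀D
  set t' : ℕ → ℝ := fun k => 1/(k+1) with ht'
  obtain ⟨u, hut, huC⟩ := hv₀T x t' hxC hx (fun k => by positivity)
    tendsto_one_div_add_atTop_nhds_zero_nat
  -- pick a good index
  have he1 : ∀ᶠ k in atTop, max Rc (max (R₁ + (‖v₀‖ + ε₁ + 1)) (Rb + (‖v₀‖ + ε₁ + 1))) ≤ ‖x k‖ :=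
    hx.eventually_ge_atTop _
  have he4 : ∀ᶠ k in atTop, t' k ≤ min δ₁ 1 := by
    refine (tendsto_one_div_add_atTop_nhds_zero_nat.eventually_lt_const ?_).mono
      fun k hk => hk.le
    exact lt_min hδ₁ one_pos
  have he5 : ∀ᶠ k in atTop, t' k / 4 < δc := by
    have h0 : Tendsto (fun k : ℕ => t' k) atTop (𝓝 0) := tendsto_one_div_add_atTop_nhds_zero_nat
    have h0' := h0.div_const 4
    rw [zero_div] at h0'
    exact h0'.eventually_lt_const hδc
  have he6 : ∀ᶠ k in atTop, ‖u k - v₀‖ ≤ ε₁/4 := by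
    have hn : Tendsto (fun k => ‖u k - v₀‖) atTop (𝓝 0) := by
      have := hut.sub_const v₀
      simpa using this.norm
    exact hn.eventually_le_const (by positivity)
  obtain ⟨k, hk1, hk4, hk5, hk6⟩ := (he1.and (he4.and (he5.and he6))).exists
  have hxk1 : Rc ≤ ‖x k‖ := le_trans (le_max_left _ _) hk1
  have hxk2 : R₁ + (‖v₀‖ + ε₁ + 1) ≤ ‖x k‖ :=
    le_trans (le_trans (le_max_left _ _) (le_max_right _ _)) hk1
  have hxk3 : Rb + (‖v₀‖ + ε₁ + 1) ≤ ‖x k‖ :=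
    le_trans (le_trans (le_max_right _ _) (le_max_right _ _)) hk1
  have ht'pos : 0 < t' k := by rw [ht']; positivity
  set tk := t' k / 4 with htk
  have htk0 : 0 < tk := by rw [htk]; linarith
  obtain ⟨w, hw, hdq⟩ := hD (x k) hxk1 tk htk0 hk5
  have hfxk : f (x k) = ⊤ := htopC _ (hxC k)
  set z := x k + tk • w with hz
  have hzt : f z ≠ ⊤ := ne_top_of_dq_lt htk0 hdq
  have hwnorm : ‖w‖ ≤ ‖v₀‖ + ε₁ := by
    calc ‖w‖ = ‖(w - v₀) + v₀‖ := by rw [sub_add_cancel]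
    _ ≤ ‖w - v₀‖ + ‖v₀‖ := norm_add_le _ _
    _ ≤ ‖v₀‖ + ε₁ := by linarith
  have htk1 : tk ≤ 1 := by
    have : t' k ≤ 1 := le_trans hk4 (min_le_right _ _)
    rw [htk]; linarith
  have hsmallstep : ‖tk • w‖ ≤ ‖v₀‖ + ε₁ := by
    rw [norm_smul, Real.norm_eq_abs, abs_of_pos htk0]
    calc tk * ‖w‖ ≤ 1 * ‖w‖ := mul_le_mul_of_nonneg_right htk1 (norm_nonneg w)
    _ = ‖w‖ := one_mul _
    _ ≤ ‖v₀‖ + ε₁ := hwnorm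
  have hznorm : R₁ ≤ ‖z‖ ∧ Rb ≤ ‖z‖ := by
    have := hp_id (x k) (tk • w)
    constructor <;> [linarith; linarith]
  have hzb : f z ≠ ⊥ := hRb z hznorm.2
  set y := (f z).toReal with hy
  have hzy : (z, y) ∈ epig f := by
    show f z ≤ ((y : ℝ) : EReal)
    rw [hy, EReal.coe_toReal hzt hzb]
  set t'' := t' k - tk with ht''
  have ht''pos : 0 < t'' := by rw [ht'', htk]; linarith
  have ht''δ : t'' ≤ δ₁ := by
    have h1 : t' k ≤ δ₁ := le_trans hk4 (min_le_left _ _)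
    rw [ht'']; linarith
  set d := t''⁻¹ • (t' k • u k - tk • w) with hd
  have hdnorm : ‖d - v₀‖ ≤ ε₁ := by
    have hone : t''⁻¹ * (t' k - tk) = 1 := by
      rw [ht'']
      field_simp
      exact div_self (ne_of_gt (by linarith))
    have hveq : d - v₀ = t''⁻¹ • (t' k • (u k - v₀) - tk • (w - v₀)) := by
      have h2 : t'' • (d - v₀) = t' k • (u k - v₀) - tk • (w - v₀) := by
        rw [hd, smul_sub, smul_smul, mul_inv_cancel₀ ht''pos.ne', one_smul, ht'']
        rw [smul_sub (t' k), smul_sub tk, sub_smul]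
        abel
      rw [← h2, smul_smul, inv_mul_cancel₀ ht''pos.ne', one_smul]
    rw [hveq, norm_smul, Real.norm_eq_abs, abs_of_pos (inv_pos.2 ht''pos)]
    have hb1 : ‖t' k • (u k - v₀) - tk • (w - v₀)‖ ≤ t' k * (ε₁/4) + tk * ε₁ := by
      refine le_trans (norm_sub_le _ _) ?_
      refine add_le_add ?_ ?_
      · rw [norm_smul, Real.norm_eq_abs, abs_of_pos ht'pos]
        exact mul_le_mul_of_nonneg_left hk6 ht'pos.le
      · rw [norm_smul, Real.norm_eq_abs, abs_of_pos htk0]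
        exact mul_le_mul_of_nonneg_left hw htk0.le
    have hval : t''⁻¹ * (t' k * (ε₁/4) + tk * ε₁) ≤ ε₁ := by
      have hti : t'' = (3/4) * t' k := by rw [ht'', htk]; ring
      rw [hti, htk]
      rw [show t' k * (ε₁/4) + t' k / 4 * ε₁ = t' k * (ε₁/2) by ring]
      rw [mul_inv]
      rw [show (3/4:ℝ)⁻¹ * (t' k)⁻¹ * (t' k * (ε₁/2))
        = (3/4:ℝ)⁻¹ * ((t' k)⁻¹ * t' k) * (ε₁/2) by ring]
      rw [inv_mul_cancel₀ ht'pos.ne', mul_one]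
      rw [show ((3/4:ℝ))⁻¹ = 4/3 by norm_num]
      linarith
    calc t''⁻¹ * ‖t' k • (u k - v₀) - tk • (w - v₀)‖
        ≤ t''⁻¹ * (t' k * (ε₁/4) + tk * ε₁) :=
          mul_le_mul_of_nonneg_left hb1 (inv_pos.2 ht''pos).le
      _ ≤ ε₁ := hval
  have hfh := HFH (z, y) hzy hznorm.1 t'' ht''pos ht''δ d hdnorm
  have hpt : ((z, y) : En n × ℝ) + t'' • ((d, M₂) : En n × ℝ)
      = (x k + t' k • u k, y + t'' * M₂) := by
    have h1 : z + t'' • d = x k + t' k • u k := by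
      rw [hd, hz, smul_smul, mul_inv_cancel₀ ht''pos.ne', one_smul]
      abel
    exact Prod.ext h1 rfl
  rw [hpt] at hfh
  have hmC : x k + t' k • u k ∈ C := huC k
  have : (⊤ : EReal) ≤ ((y + t'' * M₂ : ℝ) : EReal) := by
    rw [← htopC _ hmC]
    exact hfh
  exact absurd (lt_of_le_of_lt this (EReal.coe_lt_top _)) (lt_irrefl _)
end MainLemmas

set_option maxHeartbeats 3000000 in
theorem stmt14 (n : ℕ) (f : En n → EReal) (C : Set (En n))
    (hlsc : LowerSemicontinuous f) (hCcl : IsClosed C) (hCunb : ¬ IsBounded C)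
    (hqual :
      ({v : En n | upSub f v < ⊤} ∩
        interior (tangentConeAtInfty (fun x : En n => x) C)).Nonempty ∨
      (interior {v : En n | upSub f v < ⊤} ∩
        tangentConeAtInfty (fun x : En n => x) C).Nonempty)
    (hbd : ⊥ < ⨅ x ∈ C, f x)
    (x : ℕ → En n) (hxC : ∀ k, x k ∈ C)
    (hx : Tendsto (fun k => ‖x k‖) atTop atTop)
    (hfx : Tendsto (fun k => f (x k)) atTop (𝓝 (⨅ x ∈ C, f x))) :
    (0 : En n) ∈ subgradInfty f + normalConeAtInfty (fun x : En n => x) C ∧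
    ∀ v ∈ tangentConeAtInfty (fun x : En n => x) C, 0 ≤ upSub f v := by
  classical
  set T := tangentConeAtInfty (fun x : En n => x) C with hTdef
  set Eg : Set (En n × ℝ) := {p : En n × ℝ | p.1 ∈ C ∧ f p.1 ≤ (p.2 : EReal)} with hEgdef
  have hCm : ∀ z ∈ C, (⨅ x ∈ C, f x) ≤ f z := fun z hz => iInf₂_le z hz
  -- setup of the qualification data
  have hsetup : ∃ v₀ : En n, upSub f v₀ < ⊤ ∧ v₀ ∈ T ∧
      ((∃ ρ₀ : ℝ, 0 < ρ₀ ∧ closedBall v₀ ρ₀ ⊆ T) ∨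
       (∃ M₂ ε₁ R₁ δ₁ : ℝ, 0 < ε₁ ∧ 0 < δ₁ ∧
         ∀ z ∈ epig f, R₁ ≤ ‖z.1‖ → ∀ t : ℝ, 0 < t → t ≤ δ₁ → ∀ d : En n, ‖d - v₀‖ ≤ ε₁ →
           z + t • ((d, M₂) : En n × ℝ) ∈ epig f)) := by
    rcases hqual with ⟨v₀, hv₀D, hv₀int⟩ | ⟨v₀, hv₀int, hv₀T⟩
    · obtain ⟨ρ, hρball, hρ⟩ := Metric.mem_nhds_iff.1 (mem_interior_iff_mem_nhds.1 hv₀int)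
      exact ⟨v₀, hv₀D, interior_subset hv₀int, Or.inl ⟨ρ/2, by linarith,
        subset_trans (closedBall_subset_ball (by linarith)) hρ⟩⟩
    · obtain ⟨σ, hσ, hsubD⟩ := Metric.mem_nhds_iff.1 (mem_interior_iff_mem_nhds.1 hv₀int)
      have hballD : ∀ u ∈ ball v₀ σ, upSub f u < ⊤ := fun u hu => hsubD hu
      obtain ⟨M₂, ε₁, R₁, δ₁, hε₁, hδ₁, HFH⟩ := fhyper hlsc hσ hballD
      exact ⟨v₀, hballD v₀ (mem_ball_self hσ), hv₀T,
        Or.inr ⟨M₂, ε₁, R₁, δ₁, hε₁, hδ₁, HFH⟩⟩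
  obtain ⟨v₀, hv₀D, hv₀T, hcase⟩ := hsetup
  -- the infimum is not ⊤
  have hmtop : (⨅ x ∈ C, f x) ≠ ⊤ := by
    intro htop
    have htopC : ∀ z ∈ C, f z = ⊤ := fun z hz => top_le_iff.1 (htop ▸ hCm z hz)
    rcases hcase with ⟨ρ₀, hρ₀, hsub⟩ | ⟨M₂, ε₁, R₁, δ₁, hε₁, hδ₁, HFH⟩
    · exact m_ne_top_case1 hCcl hv₀D hρ₀ hsub x hxC hx htopC
    · exact m_ne_top_case2 hv₀T hv₀D hε₁ hδ₁ HFH x hxC hx htopC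
  have hmbot : (⨅ x ∈ C, f x) ≠ ⊥ := hbd.ne'
  set m' : ℝ := (⨅ x ∈ C, f x).toReal with hm'def
  have hm' : (⨅ x ∈ C, f x) = (m' : EReal) := (EReal.coe_toReal hmtop hmbot).symm
  have hCm' : ∀ z ∈ C, (m' : EReal) ≤ f z := fun z hz => hm' ▸ hCm z hz
  have hL9 : ∀ q ∈ tangentConeAtInfty Prod.fst Eg, (0:ℝ) ≤ q.2 := by
    rw [hEgdef]
    exact TepiG_nonneg hCm' x hxC hx (hm' ▸ hfx)
  -- the convex cone generated by Tepi f and -T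
  set Kset : Set (En n × ℝ) :=
    {q | ∃ a ∈ Tepi f, ∃ u ∈ T, q = a + (((-u : En n), (0:ℝ)) : En n × ℝ)} with hKdef
  -- (0,-1) is not in the closure of Kset
  have hnot : (((0 : En n), (-1:ℝ)) : En n × ℝ) ∉ closure Kset := by
    intro hmem
    obtain ⟨q, hqK, hqlim⟩ := mem_closure_iff_seq_limit.1 hmem
    simp only [hKdef, Set.mem_setOf_eq] at hqK
    choose a ha u hu hqe using hqK
    have hq1 : Tendsto (fun j => (a j).1 - u j) atTop (𝓝 0) := by
      have h1 := (continuous_fst.tendsto _).comp hqlim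
      have h2 : ∀ j, (q j).1 = (a j).1 - u j := by
        intro j
        rw [hqe j]
        show (a j).1 + (-u j) = (a j).1 - u j
        rw [sub_eq_add_neg]
      refine Tendsto.congr (fun j => (h2 j)) ?_
      simpa [Function.comp_def] using h1
    have hq2 : Tendsto (fun j => (a j).2) atTop (𝓝 (-1)) := by
      have h1 := (continuous_snd.tendsto _).comp hqlim
      have h2 : ∀ j, (q j).2 = (a j).2 := by
        intro j
        rw [hqe j]
        show (a j).2 + 0 = (a j).2
        ring
      refine Tendsto.congr (fun j => (h2 j)) ?_
      simpa [Function.comp_def] using h1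
    have hnormt : Tendsto (fun j => ‖(a j).1 - u j‖) atTop (𝓝 0) := by
      simpa using hq1.norm
    rcases hcase with ⟨ρ₀, hρ₀, hsub⟩ | ⟨M₂, ε₁, R₁, δ₁, hε₁, hδ₁, HFH⟩
    · -- case (i)
      obtain ⟨c₀, hc₀, -⟩ := EReal.exists_between_coe_real hv₀D
      have hv₀c₀ : ((v₀, c₀) : En n × ℝ) ∈ Tepi f := mem_Tepi_of_upSub_lt hc₀
      set lam : ℝ := 1/(2*(1+|c₀|)) with hlamdef
      have habs : (0:ℝ) < 1 + |c₀| := by positivity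
      have hlam0 : 0 < lam := by rw [hlamdef]; positivity
      have hlam1 : lam < 1 := by
        rw [hlamdef]
        rw [div_lt_one (by positivity)]
        nlinarith [abs_nonneg c₀]
      have hlamc : lam + lam * |c₀| = 1/2 := by
        rw [hlamdef]
        field_simp
      obtain ⟨j, hj1, hj2⟩ := ((hq2.eventually_lt_const (by norm_num : (-1:ℝ) < -3/4)).and
        (hnormt.eventually_le_const (by positivity : (0:ℝ) < lam * ρ₀ / 2))).exists
      set q₁ : En n := (1-lam) • (a j).1 + lam • v₀ with hq₁def
      have hcombo : ((1-lam) • a j + lam • ((v₀, c₀) : En n × ℝ)) ∈ Tepi f :=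
        tcai_combo hp_fst (ha j) hv₀c₀ (by linarith) hlam0.le
      have hballq : closedBall q₁ (lam*ρ₀/2) ⊆ T := by
        intro ζ hζ
        rw [mem_closedBall, dist_eq_norm] at hζ
        set inner0 : En n := v₀ + lam⁻¹ • ((ζ - q₁) + (1-lam) • ((a j).1 - u j)) with hin
        have hinmem : inner0 ∈ closedBall v₀ ρ₀ := by
          rw [mem_closedBall, dist_eq_norm]
          have h3 : inner0 - v₀ = lam⁻¹ • ((ζ - q₁) + (1-lam) • ((a j).1 - u j)) := by
            rw [hin]; abel
          rw [h3, norm_smul, Real.norm_eq_abs, abs_of_pos (inv_pos.2 hlam0)]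
          have h4 : ‖(ζ - q₁) + (1-lam) • ((a j).1 - u j)‖ ≤ lam*ρ₀/2 + lam*ρ₀/2 := by
            refine le_trans (norm_add_le _ _) ?_
            refine add_le_add hζ ?_
            rw [norm_smul, Real.norm_eq_abs, abs_of_nonneg (by linarith : (0:ℝ) ≤ 1-lam)]
            calc (1-lam) * ‖(a j).1 - u j‖ ≤ 1 * ‖(a j).1 - u j‖ := by
                  exact mul_le_mul_of_nonneg_right (by linarith) (norm_nonneg _)
              _ = ‖(a j).1 - u j‖ := one_mul _
              _ ≤ lam * ρ₀ / 2 := hj2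
          calc lam⁻¹ * ‖(ζ - q₁) + (1-lam) • ((a j).1 - u j)‖
              ≤ lam⁻¹ * (lam*ρ₀/2 + lam*ρ₀/2) :=
                mul_le_mul_of_nonneg_left h4 (inv_pos.2 hlam0).le
            _ = ρ₀ := by
                rw [show lam*ρ₀/2 + lam*ρ₀/2 = lam * ρ₀ by ring,
                  inv_mul_cancel_left₀ hlam0.ne']
        have hζeq : ζ = (1-lam) • u j + lam • inner0 := by
          rw [hin, smul_add, smul_smul, mul_inv_cancel₀ hlam0.ne', one_smul, hq₁def,
            smul_sub]
          abel
        rw [hζeq]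
        exact tcai_combo hp_id (hu j) (hsub hinmem) (by linarith) hlam0.le
      obtain ⟨Rh, δh, hδh, hypC⟩ := tcai_hyper hCcl hp_id
        (show (0:ℝ) < lam*ρ₀/8 by positivity)
        (subset_trans (closedBall_subset_closedBall (by nlinarith [mul_pos hlam0 hρ₀] : 2*(lam*ρ₀/8) ≤ lam*ρ₀/2))
          hballq)
      have hTepiG : ((1-lam) • a j + lam • ((v₀, c₀) : En n × ℝ)) ∈
          tangentConeAtInfty Prod.fst Eg := by
        rw [hEgdef]
        exact combo_mem_TepiG1 hcombo (show (0:ℝ) < lam*ρ₀/8 by positivity) hδh hypC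
      have h0le := hL9 _ hTepiG
      have hsnd : ((1-lam) • a j + lam • ((v₀, c₀) : En n × ℝ)).2
          = (1-lam) * (a j).2 + lam * c₀ := rfl
      rw [hsnd] at h0le
      have f1 : (1-lam) * (a j).2 ≤ (1-lam) * (-3/4) :=
        mul_le_mul_of_nonneg_left hj1.le (by linarith)
      have f2 : lam * c₀ ≤ lam * |c₀| :=
        mul_le_mul_of_nonneg_left (le_abs_self c₀) hlam0.le
      nlinarith
    · -- case (ii)
      set lam : ℝ := 1/(2*(1+|M₂|)) with hlamdef
      have habs : (0:ℝ) < 1 + |M₂| := by positivity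
      have hlam0 : 0 < lam := by rw [hlamdef]; positivity
      have hlam1 : lam < 1 := by
        rw [hlamdef]
        rw [div_lt_one (by positivity)]
        nlinarith [abs_nonneg M₂]
      have hlamc : lam + lam * |M₂| = 1/2 := by
        rw [hlamdef]
        field_simp
      obtain ⟨j, hj1, hj2⟩ := ((hq2.eventually_lt_const (by norm_num : (-1:ℝ) < -3/4)).and
        (hnormt.eventually_le_const (by positivity : (0:ℝ) < lam * (ε₁/2)))).exists
      set ub : En n := (1-lam) • u j + lam • v₀ with hubdef
      have hubT : ub ∈ T := tcai_combo hp_id (hu j) hv₀T (by linarith) hlam0.le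
      have hA : ((1-lam) • a j) ∈ Tepi f := tcai_smul' (ha j) (by linarith)
      have hdir : ‖(lam⁻¹ • (ub - ((1-lam) • a j).1)) - v₀‖ ≤ ε₁/2 := by
        have h1 : ub - ((1-lam) • a j).1 = (1-lam) • (u j - (a j).1) + lam • v₀ := by
          show (1-lam) • u j + lam • v₀ - (1-lam) • (a j).1 = _
          rw [smul_sub]
          abel
        have halg : lam⁻¹ • (ub - ((1-lam) • a j).1) - v₀
            = (lam⁻¹ * (1-lam)) • (u j - (a j).1) := by
          rw [h1, smul_add, smul_smul, smul_smul, inv_mul_cancel₀ hlam0.ne', one_smul]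
          abel
        rw [halg, norm_smul, Real.norm_eq_abs,
          abs_of_nonneg (mul_nonneg (inv_pos.2 hlam0).le (by linarith))]
        have h5 : ‖u j - (a j).1‖ ≤ lam * (ε₁/2) := by
          rw [norm_sub_rev]
          exact hj2
        have h6 : lam⁻¹ * (1-lam) ≤ lam⁻¹ := by
          calc lam⁻¹ * (1-lam) ≤ lam⁻¹ * 1 :=
              mul_le_mul_of_nonneg_left (by linarith) (inv_pos.2 hlam0).le
            _ = lam⁻¹ := mul_one _
        calc (lam⁻¹ * (1-lam)) * ‖u j - (a j).1‖ ≤ lam⁻¹ * (lam * (ε₁/2)) := by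
              refine mul_le_mul h6 h5 (norm_nonneg _) (inv_pos.2 hlam0).le
          _ = ε₁/2 := by field_simp
      have hTepiG : ((ub, ((1-lam) • a j).2 + lam * M₂) : En n × ℝ) ∈
          tangentConeAtInfty Prod.fst Eg := by
        rw [hEgdef]
        exact combo_mem_TepiG2 hA hubT hlam0 hε₁ hδ₁ HFH hdir
      have h0le := hL9 _ hTepiG
      have hsnd : (((ub, ((1-lam) • a j).2 + lam * M₂) : En n × ℝ)).2
          = (1-lam) * (a j).2 + lam * M₂ := rfl
      rw [hsnd] at h0le
      have f1 : (1-lam) * (a j).2 ≤ (1-lam) * (-3/4) :=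
        mul_le_mul_of_nonneg_left hj1.le (by linarith)
      have f2 : lam * M₂ ≤ lam * |M₂| :=
        mul_le_mul_of_nonneg_left (le_abs_self M₂) hlam0.le
      nlinarith
  -- Kset is convex
  have hKconv : Convex ℝ Kset := by
    intro p hp q hq α β hα hβ hαβ
    obtain ⟨ap, hap, up, hup, rfl⟩ := hp
    obtain ⟨aq, haq, uq, huq, rfl⟩ := hq
    refine ⟨α • ap + β • aq, tcai_combo hp_fst hap haq hα hβ, α • up + β • uq,
      tcai_combo hp_id hup huq hα hβ, ?_⟩
    apply Prod.ext
    · show α • (ap.1 + (-up)) + β • (aq.1 + (-uq))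
        = (α • ap.1 + β • aq.1) + (-(α • up + β • uq))
      rw [smul_add, smul_add, smul_neg, smul_neg]
      abel
    · show α * (ap.2 + 0) + β * (aq.2 + 0) = (α * ap.2 + β * aq.2) + 0
      ring
  -- separation
  obtain ⟨φ, u₀, hφpt, hφK⟩ :=
    geometric_hahn_banach_point_closed hKconv.closure isClosed_closure hnot
  have h0K : (0 : En n × ℝ) ∈ Kset := ⟨0, tcai_zero, 0, tcai_zero, by ext <;> simp⟩
  have hu₀neg : u₀ < 0 := by
    have h1 := hφK 0 (subset_closure h0K)
    simpa using h1
  have hφnonneg : ∀ q ∈ Kset, 0 ≤ φ q := by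
    intro q hq
    by_contra hneg
    push_neg at hneg
    set cc := (u₀ - 1)/(φ q) with hccdef
    have hcc0 : 0 < cc := div_pos_of_neg_of_neg (by linarith) hneg
    have hscaled : cc • q ∈ Kset := by
      obtain ⟨aa, haa, uu, huu, rfl⟩ := hq
      refine ⟨cc • aa, tcai_smul haa hcc0, cc • uu, tcai_smul huu hcc0, ?_⟩
      rw [smul_add]
      congr 1
      apply Prod.ext
      · show cc • (-uu) = -(cc • uu)
        rw [smul_neg]
      · show cc • (0:ℝ) = (0:ℝ)
        simp
    have h2 := hφK _ (subset_closure hscaled)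
    rw [map_smul, smul_eq_mul, hccdef, div_mul_cancel₀ _ hneg.ne] at h2
    linarith
  set β : ℝ := φ (((0:En n), (1:ℝ)) : En n × ℝ) with hβdef
  have hβpos : 0 < β := by
    have h1 : φ (((0:En n), (-1:ℝ)) : En n × ℝ) = -β := by
      rw [hβdef, ← map_neg]
      congr 1
      apply Prod.ext <;> simp
    rw [h1] at hφpt
    linarith
  set φ1 : En n →L[ℝ] ℝ := φ.comp (ContinuousLinearMap.inl ℝ (En n) ℝ) with hφ1def
  set ξ₁ : En n := (InnerProductSpace.toDual ℝ (En n)).symm φ1 with hξ₁def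
  have hξrep : ∀ y : En n, ⟪ξ₁, y⟫_ℝ = φ ((y, (0:ℝ)) : En n × ℝ) := by
    intro y
    rw [hξ₁def, InnerProductSpace.toDual_symm_apply]
    rfl
  have hφdecomp : ∀ q : En n × ℝ, φ q = ⟪ξ₁, q.1⟫_ℝ + q.2 * β := by
    intro q
    rw [hξrep]
    have hqsplit : (q : En n × ℝ) = ((q.1, (0:ℝ)) : En n × ℝ) + q.2 • ((0:En n), (1:ℝ)) := by
      apply Prod.ext <;> simp
    calc φ q = φ (((q.1, (0:ℝ)) : En n × ℝ) + q.2 • ((0:En n), (1:ℝ))) := by rw [← hqsplit]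
    _ = φ ((q.1, (0:ℝ)) : En n × ℝ) + q.2 * φ (((0:En n), (1:ℝ)) : En n × ℝ) := by
        rw [map_add, map_smul, smul_eq_mul]
    _ = _ := rfl
  set ξ : En n := (-β⁻¹) • ξ₁ with hξdef
  have hTepiK : ∀ q ∈ Tepi f, q ∈ Kset := by
    intro q hq
    refine ⟨q, hq, 0, tcai_zero, ?_⟩
    apply Prod.ext <;> simp
  have hTK : ∀ v ∈ T, (((-v : En n), (0:ℝ)) : En n × ℝ) ∈ Kset := by
    intro v hv
    refine ⟨0, tcai_zero, v, hv, ?_⟩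
    apply Prod.ext <;> simp
  have hβinv : β⁻¹ * β = 1 := inv_mul_cancel₀ hβpos.ne'
  have hsub1 : ξ ∈ subgradInfty f := by
    intro q hq
    have h0 := hφnonneg q (hTepiK q hq)
    rw [hφdecomp] at h0
    show ⟪q.1, ξ⟫_ℝ + q.2 * (-1:ℝ) ≤ 0
    rw [hξdef, real_inner_smul_right, real_inner_comm]
    have h2 : 0 ≤ β⁻¹ * (⟪ξ₁, q.1⟫_ℝ + q.2 * β) := mul_nonneg (inv_pos.2 hβpos).le h0
    have h3 : β⁻¹ * (q.2 * β) = q.2 := by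
      rw [mul_comm q.2 β, ← mul_assoc, hβinv, one_mul]
    rw [mul_add, h3] at h2
    linarith
  have hsub2 : -ξ ∈ normalConeAtInfty (fun x : En n => x) C := by
    intro v hv
    have h0 := hφnonneg _ (hTK v hv)
    rw [hφdecomp] at h0
    have h3 : ⟪ξ₁, (((-v : En n), (0:ℝ)) : En n × ℝ).1⟫_ℝ = -⟪ξ₁, v⟫_ℝ := by
      show ⟪ξ₁, -v⟫_ℝ = -⟪ξ₁, v⟫_ℝ
      rw [inner_neg_right]
    rw [h3] at h0
    show ⟪v, -ξ⟫_ℝ ≤ 0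
    have hnegξ : -ξ = β⁻¹ • ξ₁ := by
      rw [hξdef, neg_smul, neg_neg]
    rw [hnegξ, real_inner_smul_right, real_inner_comm]
    simp only [zero_mul, add_zero] at h0
    have h4 : ⟪ξ₁, v⟫_ℝ ≤ 0 := by linarith
    nlinarith [mul_nonneg (inv_pos.2 hβpos).le (neg_nonneg.2 h4)]
  constructor
  · exact Set.mem_add.2 ⟨ξ, hsub1, -ξ, hsub2, add_neg_cancel ξ⟩
  · intro v hv
    by_contra hneg
    push_neg at hneg
    have hneg' : upSub f v < ((0:ℝ) : EReal) := by exact_mod_cast hneg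
    obtain ⟨c, hc1, hc2⟩ := EReal.exists_between_coe_real hneg'
    have hvc : ((v, c) : En n × ℝ) ∈ Tepi f := mem_Tepi_of_upSub_lt hc1
    have h1 := hφnonneg _ (hTepiK _ hvc)
    rw [hφdecomp] at h1
    have h2 := hφnonneg _ (hTK v hv)
    rw [hφdecomp] at h2
    have h3 : ⟪ξ₁, (((-v : En n), (0:ℝ)) : En n × ℝ).1⟫_ℝ = -⟪ξ₁, v⟫_ℝ := by
      show ⟪ξ₁, -v⟫_ℝ = -⟪ξ₁, v⟫_ℝ
      rw [inner_neg_right]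
    rw [h3] at h2
    have hc0 : c < 0 := by exact_mod_cast hc2
    have h4 : (((v, c) : En n × ℝ)).1 = v := rfl
    have h5 : (((v, c) : En n × ℝ)).2 = c := rfl
    rw [h4, h5] at h1
    simp only [zero_mul, add_zero] at h2
    nlinarith [mul_neg_of_neg_of_pos hc0 hβpos]
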